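/- arXiv:2111.09236 — 4 statements merged into one kernel-verified Lean document; each statement's English description precedes it below -/
import Mathlib

section
/- If H₁ and H₂ are connected graphs, each with at least 3 vertices and at least 2 edges, which share exactly one vertex and have no edges between them, then m₂(H₁ ∪ H₂) ≤ max{m₂(H₁), m₂(H₂)}. -/
open SimpleGraph

/-- The 2-density of a subgraph `A` of an ambient graph `G`: the supremum of
`(e(B) - 1)/(v(B) - 2)` over all subgraphs `B ≤ A` with at least two edges. -/
noncomputable def twoDensitySub {V : Type*} [Fintype V] {G : SimpleGraph V}
    (A : G.Subgraph) : ℝ :=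
  sSup {x : ℝ | ∃ B : G.Subgraph, B ≤ A ∧ 2 ≤ B.edgeSet.ncard ∧
    x = ((B.edgeSet.ncard : ℝ) - 1) / ((B.verts.ncard : ℝ) - 2)}

/-! Split a subgraph `B ≤ H₁ ⊔ H₂` into `B ⊓ H₁` and `B ⊓ H₂`. Since `H₁` and `H₂` share at most
one vertex, the two parts share no edge and at most one vertex, so `e(B)` is the sum of their edge
counts while their vertex counts add up to at most `v(B) + 1`. Let `M` be the larger 2-density. A
part with at least one edge satisfies `e - 1 ≤ M (v - 2)`; if one part has no edge, this bound for
the other part already gives it for `B`, and otherwise adding the two bounds gives it for `B`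
because the extra `1` on the left is absorbed by `M ≥ 1`. Finally `M ≥ 1` since the connected
graph `H₁` has `e(H₁) ≥ v(H₁) - 1`. -/

namespace SimpleGraph.Subgraph

variable {V : Type*} {G : SimpleGraph V}

lemma ncard_edgeSet_coe (H : G.Subgraph) : H.coe.edgeSet.ncard = H.edgeSet.ncard := by
  rw [← H.image_coe_edgeSet_coe, Set.ncard_image_of_injective _
    (Sym2.map.injective Subtype.val_injective)]

lemma ncard_edgeSet_le_choose_two [Finite V] (H : G.Subgraph) :
    H.edgeSet.ncard ≤ H.verts.ncard.choose 2 := by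
  classical
  have := Fintype.ofFinite V
  calc H.edgeSet.ncard = H.coe.edgeFinset.card := by
        rw [← H.ncard_edgeSet_coe, ← coe_edgeFinset, Set.ncard_coe_finset]
    _ ≤ (Fintype.card H.verts).choose 2 := card_edgeFinset_le_card_choose_two
    _ = H.verts.ncard.choose 2 := by rw [← Nat.card_eq_fintype_card, Nat.card_coe_set_eq]

lemma two_le_ncard_verts [Finite V] {H : G.Subgraph} (h : 1 ≤ H.edgeSet.ncard) :
    2 ≤ H.verts.ncard := by
  by_contra! hv
  have := H.ncard_edgeSet_le_choose_two
  rw [Nat.choose_eq_zero_of_lt hv] at this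
  omega

lemma three_le_ncard_verts [Finite V] {H : G.Subgraph} (h : 2 ≤ H.edgeSet.ncard) :
    3 ≤ H.verts.ncard := by
  by_contra! hv
  have := H.ncard_edgeSet_le_choose_two.trans <|
    (Nat.choose_le_choose 2 (Nat.le_of_lt_succ hv)).trans_eq (Nat.choose_self 2)
  omega

lemma Connected.ncard_verts_le_ncard_edgeSet_add_one {H : G.Subgraph} (h : H.Connected) :
    H.verts.ncard ≤ H.edgeSet.ncard + 1 := by
  have := h.coe.card_vert_le_card_edgeSet_add_one
  rwa [Nat.card_coe_set_eq, Nat.card_coe_set_eq, ncard_edgeSet_coe] at this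

lemma disjoint_edgeSet_of_subsingleton_inter {H₁ H₂ : G.Subgraph}
    (h : (H₁.verts ∩ H₂.verts).Subsingleton) : Disjoint H₁.edgeSet H₂.edgeSet := by
  rw [Set.disjoint_left]
  rintro ⟨a, b⟩ h₁ h₂
  exact (h₁ : H₁.Adj a b).ne (h ⟨h₁.fst_mem, h₂.fst_mem⟩ ⟨h₁.snd_mem, h₂.snd_mem⟩)

lemma inf_sup_inf_eq_of_le_sup {B H₁ H₂ : G.Subgraph} (hB : B ≤ H₁ ⊔ H₂) :
    B ⊓ H₁ ⊔ B ⊓ H₂ = B := by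
  rw [← inf_sup_left, inf_eq_left.2 hB]

lemma ncard_edgeSet_eq_add_of_le_sup [Finite V] {B H₁ H₂ : G.Subgraph} (hB : B ≤ H₁ ⊔ H₂)
    (hH : Disjoint H₁.edgeSet H₂.edgeSet) :
    B.edgeSet.ncard = (B ⊓ H₁).edgeSet.ncard + (B ⊓ H₂).edgeSet.ncard := by
  conv_lhs => rw [← inf_sup_inf_eq_of_le_sup hB, edgeSet_sup]
  refine Set.ncard_union_eq (hH.mono ?_ ?_) <;> simp only [edgeSet_inf, Set.inter_subset_right]

lemma ncard_verts_inf_add_le [Finite V] {B H₁ H₂ : G.Subgraph} (hB : B ≤ H₁ ⊔ H₂) :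
    (B ⊓ H₁).verts.ncard + (B ⊓ H₂).verts.ncard ≤
      B.verts.ncard + (H₁.verts ∩ H₂.verts).ncard := by
  have hinter : (B ⊓ H₁).verts ∩ (B ⊓ H₂).verts ⊆ H₁.verts ∩ H₂.verts := by
    simp only [verts_inf]
    exact Set.inter_subset_inter Set.inter_subset_right Set.inter_subset_right
  have := Set.ncard_union_add_ncard_inter (B ⊓ H₁).verts (B ⊓ H₂).verts
  rw [← verts_sup, inf_sup_inf_eq_of_le_sup hB] at this
  have := Set.ncard_le_ncard hinter
  omega

lemma edgeSet_subset_of_ncard_edgeSet_inf_eq_zero [Finite V] {B H₁ H₂ : G.Subgraph}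
    (hB : B ≤ H₁ ⊔ H₂) (h : (B ⊓ H₂).edgeSet.ncard = 0) : B.edgeSet ⊆ H₁.edgeSet := by
  rw [Set.ncard_eq_zero, edgeSet_inf] at h
  intro e he
  rcases (edgeSet_sup ▸ edgeSet_mono hB he : e ∈ H₁.edgeSet ∪ H₂.edgeSet) with h₁ | h₂
  · exact h₁
  · exact absurd ⟨he, h₂⟩ (Set.eq_empty_iff_forall_notMem.1 h e)

end SimpleGraph.Subgraph

section TwoDensity

open SimpleGraph.Subgraph

variable {V : Type*} [Fintype V] {G : SimpleGraph V} {A B : G.Subgraph} {M : ℝ}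

lemma twoDensitySub_nonneg (A : G.Subgraph) : 0 ≤ twoDensitySub A := by
  refine Real.sSup_nonneg fun x ⟨B, _, hB, hx⟩ => hx ▸ div_nonneg ?_ ?_
  · have : (2 : ℝ) ≤ B.edgeSet.ncard := by exact_mod_cast hB
    linarith
  · have : (3 : ℝ) ≤ B.verts.ncard := by exact_mod_cast three_le_ncard_verts hB
    linarith

lemma div_le_twoDensitySub (hBA : B ≤ A) (hB : 2 ≤ B.edgeSet.ncard) :
    ((B.edgeSet.ncard : ℝ) - 1) / ((B.verts.ncard : ℝ) - 2) ≤ twoDensitySub A := by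
  refine le_csSup ?_ ⟨B, hBA, hB, rfl⟩
  refine ((Set.finite_range fun C : G.Subgraph =>
    ((C.edgeSet.ncard : ℝ) - 1) / ((C.verts.ncard : ℝ) - 2)).subset ?_).bddAbove
  rintro x ⟨C, -, -, rfl⟩
  exact ⟨C, rfl⟩

lemma sub_two_pos_of_two_le_ncard_edgeSet (hB : 2 ≤ B.edgeSet.ncard) :
    (0 : ℝ) < (B.verts.ncard : ℝ) - 2 := by
  have : (3 : ℝ) ≤ B.verts.ncard := by exact_mod_cast three_le_ncard_verts hB
  linarith

lemma twoDensitySub_le (hM : 0 ≤ M)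
    (h : ∀ B ≤ A, 2 ≤ B.edgeSet.ncard → (B.edgeSet.ncard : ℝ) - 1 ≤ M * (B.verts.ncard - 2)) :
    twoDensitySub A ≤ M := by
  refine Real.sSup_le (fun x ⟨B, hBA, hB, hx⟩ => ?_) hM
  rw [hx, div_le_iff₀ (sub_two_pos_of_two_le_ncard_edgeSet hB)]
  exact h B hBA hB

lemma ncard_edgeSet_sub_one_le_of_edgeSet_subset (hBA : B.edgeSet ⊆ A.edgeSet)
    (hA : twoDensitySub A ≤ M) (hB : 1 ≤ B.edgeSet.ncard) :
    (B.edgeSet.ncard : ℝ) - 1 ≤ M * (B.verts.ncard - 2) := by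
  have hM : 0 ≤ M := (twoDensitySub_nonneg A).trans hA
  obtain hB | hB := hB.eq_or_lt
  · have : (2 : ℝ) ≤ B.verts.ncard := by exact_mod_cast two_le_ncard_verts hB.le
    rw [← hB, Nat.cast_one, sub_self]
    exact mul_nonneg hM (by linarith)
  have he : (B ⊓ A).edgeSet = B.edgeSet := by rw [Subgraph.edgeSet_inf, Set.inter_eq_left.2 hBA]
  have hB2 : 2 ≤ (B ⊓ A).edgeSet.ncard := he ▸ hB
  have hv : ((B ⊓ A).verts.ncard : ℝ) ≤ B.verts.ncard := by
    exact_mod_cast Set.ncard_le_ncard (verts_mono inf_le_left)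
  have := (div_le_twoDensitySub inf_le_right hB2).trans hA
  rw [div_le_iff₀ (sub_two_pos_of_two_le_ncard_edgeSet hB2), he] at this
  nlinarith

lemma SimpleGraph.Subgraph.Connected.one_le_twoDensitySub (hA : A.Connected)
    (he : 2 ≤ A.edgeSet.ncard) : 1 ≤ twoDensitySub A := by
  refine le_trans ?_ (div_le_twoDensitySub le_rfl he)
  rw [one_le_div (sub_two_pos_of_two_le_ncard_edgeSet he)]
  have : (A.verts.ncard : ℝ) ≤ A.edgeSet.ncard + 1 := by
    exact_mod_cast hA.ncard_verts_le_ncard_edgeSet_add_one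
  linarith

lemma twoDensitySub_sup_le {H₁ H₂ : G.Subgraph} (hinter : (H₁.verts ∩ H₂.verts).ncard ≤ 1)
    (hM : 1 ≤ M) (h₁ : twoDensitySub H₁ ≤ M) (h₂ : twoDensitySub H₂ ≤ M) :
    twoDensitySub (H₁ ⊔ H₂) ≤ M := by
  refine twoDensitySub_le (by linarith) fun B hB hB2 => ?_
  have hdisj :=
    disjoint_edgeSet_of_subsingleton_inter (Set.ncard_le_one_iff_subsingleton.1 hinter)
  have he := ncard_edgeSet_eq_add_of_le_sup hB hdisj
  obtain he₂ | he₂ := Nat.eq_zero_or_pos (B ⊓ H₂).edgeSet.ncard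
  · exact ncard_edgeSet_sub_one_le_of_edgeSet_subset
      (edgeSet_subset_of_ncard_edgeSet_inf_eq_zero hB he₂) h₁ (by omega)
  obtain he₁ | he₁ := Nat.eq_zero_or_pos (B ⊓ H₁).edgeSet.ncard
  · exact ncard_edgeSet_sub_one_le_of_edgeSet_subset
      (edgeSet_subset_of_ncard_edgeSet_inf_eq_zero (sup_comm H₁ H₂ ▸ hB) he₁) h₂ (by omega)
  have hB₁ := ncard_edgeSet_sub_one_le_of_edgeSet_subset
    (by simp only [Subgraph.edgeSet_inf, Set.inter_subset_right]) h₁ he₁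
  have hB₂ := ncard_edgeSet_sub_one_le_of_edgeSet_subset
    (by simp only [Subgraph.edgeSet_inf, Set.inter_subset_right]) h₂ he₂
  have hv : ((B ⊓ H₁).verts.ncard : ℝ) + (B ⊓ H₂).verts.ncard ≤ B.verts.ncard + 1 := by
    exact_mod_cast (ncard_verts_inf_add_le hB).trans (by omega)
  rw [he, Nat.cast_add]
  nlinarith

end TwoDensity

theorem twoDensity_union_le_max_general {V : Type*} [Fintype V] {G : SimpleGraph V}
    (H₁ H₂ : G.Subgraph)
    (hc1 : H₁.Connected)
    (he1 : 2 ≤ H₁.edgeSet.ncard)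
    (hshared : (H₁.verts ∩ H₂.verts).ncard = 1) :
    twoDensitySub (H₁ ⊔ H₂) ≤ max (twoDensitySub H₁) (twoDensitySub H₂) :=
  twoDensitySub_sup_le hshared.le ((hc1.one_le_twoDensitySub he1).trans (le_max_left _ _))
    (le_max_left _ _) (le_max_right _ _)

/-- If `H₁` and `H₂` are connected graphs, each with at least 3 vertices and at least 2
edges, sharing exactly one vertex and with no edges between them, then
`m₂(H₁ ∪ H₂) ≤ max (m₂ H₁) (m₂ H₂)`. -/
theorem twoDensity_union_le_max {V : Type*} [Fintype V] {G : SimpleGraph V}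
    (H₁ H₂ : G.Subgraph)
    (hc1 : H₁.Connected) (hc2 : H₂.Connected)
    (hv1 : 3 ≤ H₁.verts.ncard) (hv2 : 3 ≤ H₂.verts.ncard)
    (he1 : 2 ≤ H₁.edgeSet.ncard) (he2 : 2 ≤ H₂.edgeSet.ncard)
    (hshared : (H₁.verts ∩ H₂.verts).ncard = 1)
    (hnoedges : ∀ a b : V, a ∈ H₁.verts \ H₂.verts → b ∈ H₂.verts \ H₁.verts →
      ¬ (H₁ ⊔ H₂).Adj a b) :
    twoDensitySub (H₁ ⊔ H₂) ≤ max (twoDensitySub H₁) (twoDensitySub H₂) :=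
  twoDensity_union_le_max_general H₁ H₂ hc1 he1 hshared
end

section
/- Let ℓ ≥ 2 and let 𝓗 = (A ∪ B; E) be an ℓ-uniform hypergraph with |e ∩ A| = 1 and |e ∩ B| = ℓ−1 for every edge e. Suppose that for every A' ⊆ A and B' ⊆ B with |B'| ≤ (2ℓ−3)(|A'|−1), there is an edge intersecting A' and disjoint from B'. Then 𝓗 has a matching saturating A. -/
/-!
Haxell's alternating-tree argument. Given a matching `M` and a vertex `a₀ ∈ A` it misses, grow a
sequence of edges `s₁, s₂, …`, each containing one of the *roots* (`a₀` and the `A`-vertices of the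
matching edges hit in `B` by earlier `sᵢ`) and avoiding the `B`-vertices of the earlier `sᵢ` and of
the matching edges they hit. If `K ≥ 1` matching edges are hit so far, at most `(2ℓ - 3) K` vertices
of `B` are forbidden while there are `K + 1` roots, so the hypothesis always supplies a next edge.
An edge that hits no matching edge is added to `M` if its root is `a₀`; otherwise it replaces the
matching edge through its root, and the sequence is cut back to the `sᵢ` that hit that edge, which
may in turn have become free of hits. With `Kᵢ` the set of matching edges hit by `sᵢ`, both moves
increase `(|K₁|, |K₂|, …)` lexicographically, smaller entries counting as larger; as this vector
ranges over a finite set, eventually `a₀` is covered.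
-/

open Finset OrderDual

namespace Haxell

lemma lt_append_singleton {α : Type*} [LinearOrder α] (l : List α) (a : α) : l < l ++ [a] := by
  simpa using List.Lex.append_left (· < ·) (List.Lex.nil (a := a) (l := [])) l

lemma append_cons_lt_append_singleton {α : Type*} [LinearOrder α] (P R : List α) {a b : α}
    (h : a < b) : P ++ a :: R < P ++ [b] :=
  List.Lex.append_left _ (List.Lex.rel h) P

lemma finite_setOf_length_le_forall_le (n : ℕ) :
    {l : List ℕᵒᵈ | l.length ≤ n ∧ ∀ x ∈ l, ofDual x ≤ n}.Finite := by
  refine ((List.finite_length_le (Fin (n + 1)) n).image (List.map (toDual ∘ Fin.val))).subset ?_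
  rintro l ⟨hlen, hl⟩
  refine ⟨l.pmap (fun x hx => (⟨ofDual x, Nat.lt_succ_of_le hx⟩ : Fin (n + 1))) hl,
    by simpa using hlen, ?_⟩
  simp [List.map_pmap]

lemma of_forall_or_exists_lt {σ α : Type*} [Preorder α] {S : Set α} (hS : S.Finite) (f : σ → α)
    {p : σ → Prop} (hpS : ∀ x, p x → f x ∈ S) {q : Prop}
    (step : ∀ x, p x → q ∨ ∃ y, p y ∧ f x < f y) {x : σ} (hx : p x) : q := by
  suffices ∀ z ∈ S, ∀ x, p x → f x = z → q from this _ (hpS x hx) x hx rfl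
  intro z hz
  refine (hS.wellFoundedOn (r := (· > ·))).induction hz (P := fun z => ∀ x, p x → f x = z → q) ?_
  rintro _ - IH x hx rfl
  obtain hq | ⟨y, hy, hlt⟩ := step x hx
  · exact hq
  · exact IH _ (hpS y hy) hlt y hy rfl

variable {V : Type*}

def IsMatching (E M : Finset (Finset V)) : Prop :=
  M ⊆ E ∧ (M : Set (Finset V)).PairwiseDisjoint id

lemma IsMatching.mono {E M M' : Finset (Finset V)} (hM : IsMatching E M) (h : M' ⊆ M) :
    IsMatching E M' :=
  ⟨h.trans hM.1, hM.2.subset (coe_subset.2 h)⟩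

variable [DecidableEq V]

section Edges

variable {A B : Finset V} {E : Finset (Finset V)} {av : Finset V → V}

lemma av_mem_inter (hEA : ∀ e ∈ E, e ∩ A = {av e}) {e : Finset V} (he : e ∈ E) :
    av e ∈ e ∩ A := by
  rw [hEA e he]
  exact mem_singleton_self _

lemma eq_av_of_mem (hEA : ∀ e ∈ E, e ∩ A = {av e}) {e : Finset V} (he : e ∈ E) {v : V}
    (hv : v ∈ e) (hvA : v ∈ A) : v = av e :=
  mem_singleton.1 (hEA e he ▸ mem_inter.2 ⟨hv, hvA⟩)

lemma disjoint_of_av_notMem (hEA : ∀ e ∈ E, e ∩ A = {av e}) (hEAB : ∀ e ∈ E, e ⊆ A ∪ B)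
    {e f : Finset V} (he : e ∈ E) (hav : av e ∉ f) (hB : Disjoint (e ∩ B) f) : Disjoint e f := by
  rw [disjoint_left]
  intro v hve hvf
  rcases mem_union.1 (hEAB e he hve) with hvA | hvB
  · exact hav (eq_av_of_mem hEA he hve hvA ▸ hvf)
  · exact disjoint_left.1 hB (mem_inter.2 ⟨hve, hvB⟩) hvf

lemma IsMatching.eq_of_av_mem (hEA : ∀ e ∈ E, e ∩ A = {av e}) {M : Finset (Finset V)}
    (hM : IsMatching E M) {f g : Finset V} (hf : f ∈ M) (hg : g ∈ M) (h : av f ∈ g) : f = g := by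
  by_contra hne
  exact disjoint_left.1 (hM.2 hf hg hne) (mem_inter.1 (av_mem_inter hEA (hM.1 hf))).1 h

end Edges

section Chains

variable (B : Finset V) (M : Finset (Finset V))

def hits (s : Finset V) : Finset (Finset V) := {f ∈ M | ¬Disjoint (s ∩ B) f}

def blocked (s : Finset V) : Finset V := s ∩ B ∪ (hits B M s).biUnion (· ∩ B)

def hitsOf (l : List (Finset V)) : Finset (Finset V) := l.toFinset.biUnion (hits B M)

def blockedOf (l : List (Finset V)) : Finset V := l.toFinset.biUnion (blocked B M)

/-- Oldest edge first, with entries in `ℕᵒᵈ` so that hitting fewer matching edges counts as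
larger. -/
def sizes (l : List (Finset V)) : List ℕᵒᵈ := (l.map fun s => toDual (hits B M s).card).reverse

variable (E : Finset (Finset V)) (av : Finset V → V) (a₀ : V)

def roots (l : List (Finset V)) : Finset V := insert a₀ ((hitsOf B M l).image av)

/-- The sequence `s₁, s₂, …`, stored newest edge first, with `Kᵢ = hits B M sᵢ`; `roots` and
`blockedOf` of the edges older than `sᵢ` are the sets `A'` and `B'` to which the hypothesis is
applied to find `sᵢ`. -/
def IsAltChain : List (Finset V) → Prop
  | [] => True
  | s :: l => s ∈ E ∧ Disjoint s (blockedOf B M l) ∧ av s ∈ roots B M av a₀ l ∧ IsAltChain l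

variable {B M E av a₀}

lemma mem_hits {s f : Finset V} : f ∈ hits B M s ↔ f ∈ M ∧ ¬Disjoint (s ∩ B) f := mem_filter

lemma hits_subset (s : Finset V) : hits B M s ⊆ M := filter_subset _ _

lemma hits_mono {M' : Finset (Finset V)} (h : M' ⊆ M) (s : Finset V) :
    hits B M' s ⊆ hits B M s :=
  filter_subset_filter _ h

lemma hitsOf_subset (l : List (Finset V)) : hitsOf B M l ⊆ M :=
  biUnion_subset.2 fun _ _ => hits_subset _

lemma blockedOf_subset (l : List (Finset V)) : blockedOf B M l ⊆ B :=
  biUnion_subset.2 fun _ _ =>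
    union_subset inter_subset_right (biUnion_subset.2 fun _ _ => inter_subset_right)

lemma inter_subset_blockedOf {l : List (Finset V)} {t : Finset V} (ht : t ∈ l) :
    t ∩ B ⊆ blockedOf B M l :=
  subset_union_left.trans (subset_biUnion_of_mem (blocked B M) (List.mem_toFinset.2 ht))

lemma inter_subset_blockedOf_of_mem_hitsOf {l : List (Finset V)} {f : Finset V}
    (hf : f ∈ hitsOf B M l) : f ∩ B ⊆ blockedOf B M l := by
  obtain ⟨t, ht, hft⟩ := mem_biUnion.1 hf
  exact ((subset_biUnion_of_mem (· ∩ B) hft).trans subset_union_right).trans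
    (subset_biUnion_of_mem (blocked B M) ht)

lemma disjoint_hits_hitsOf {s : Finset V} {l : List (Finset V)}
    (h : Disjoint s (blockedOf B M l)) : Disjoint (hits B M s) (hitsOf B M l) := by
  rw [disjoint_left]
  intro f hfs hfl
  obtain ⟨v, hvs, hvf⟩ := not_disjoint_iff.1 (mem_hits.1 hfs).2
  exact disjoint_left.1 h (mem_inter.1 hvs).1
    (inter_subset_blockedOf_of_mem_hitsOf hfl (mem_inter.2 ⟨hvf, (mem_inter.1 hvs).2⟩))

lemma hitsOf_cons (s : Finset V) (l : List (Finset V)) :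
    hitsOf B M (s :: l) = hits B M s ∪ hitsOf B M l := by
  simp [hitsOf]

lemma blockedOf_cons (s : Finset V) (l : List (Finset V)) :
    blockedOf B M (s :: l) = blocked B M s ∪ blockedOf B M l := by
  simp [blockedOf]

lemma card_hitsOf_cons {s : Finset V} {l : List (Finset V)} (h : Disjoint s (blockedOf B M l)) :
    (hitsOf B M (s :: l)).card = (hits B M s).card + (hitsOf B M l).card := by
  rw [hitsOf_cons, card_union_of_disjoint (disjoint_hits_hitsOf h)]

lemma hitsOf_congr {M' : Finset (Finset V)} {l : List (Finset V)}
    (h : ∀ t ∈ l, hits B M' t = hits B M t) : hitsOf B M' l = hitsOf B M l :=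
  biUnion_congr rfl fun t ht => h t (List.mem_toFinset.1 ht)

lemma blockedOf_congr {M' : Finset (Finset V)} {l : List (Finset V)}
    (h : ∀ t ∈ l, hits B M' t = hits B M t) : blockedOf B M' l = blockedOf B M l :=
  biUnion_congr rfl fun t ht => by rw [blocked, blocked, h t (List.mem_toFinset.1 ht)]

lemma sizes_congr {M' : Finset (Finset V)} {l : List (Finset V)}
    (h : ∀ t ∈ l, hits B M' t = hits B M t) : sizes B M' l = sizes B M l := by
  rw [sizes, sizes, List.map_congr_left fun t ht => by rw [h t ht]]

lemma sizes_lt_sizes_cons (s : Finset V) (l : List (Finset V)) :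
    sizes B M l < sizes B M (s :: l) := by
  simpa [sizes] using lt_append_singleton _ _

lemma sizes_append_cons_lt {M' : Finset (Finset V)} {t : Finset V} {l₁ : List (Finset V)}
    (h : ∀ u ∈ l₁, hits B M' u = hits B M u) (ht : (hits B M' t).card < (hits B M t).card)
    (l₂ : List (Finset V)) : sizes B M (l₂ ++ t :: l₁) < sizes B M' (t :: l₁) := by
  have hM :
      sizes B M (l₂ ++ t :: l₁) = sizes B M l₁ ++ toDual (hits B M t).card :: sizes B M l₂ := by
    simp [sizes]
  have hM' : sizes B M' (t :: l₁) = sizes B M l₁ ++ [toDual (hits B M' t).card] := by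
    rw [← sizes_congr h]
    simp [sizes]
  rw [hM, hM']
  exact append_cons_lt_append_singleton _ _ (toDual_lt_toDual.2 ht)

lemma IsAltChain.tail {l : List (Finset V)} (hl : IsAltChain B M E av a₀ l) :
    IsAltChain B M E av a₀ l.tail := by
  cases l with
  | nil => trivial
  | cons s l => exact hl.2.2.2

lemma IsAltChain.of_append {l₁ : List (Finset V)} :
    ∀ {l₂ : List (Finset V)}, IsAltChain B M E av a₀ (l₂ ++ l₁) → IsAltChain B M E av a₀ l₁
  | [], hl => hl
  | _ :: _, hl => IsAltChain.of_append hl.2.2.2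

lemma isAltChain_congr {M' : Finset (Finset V)} :
    ∀ {l : List (Finset V)}, (∀ u ∈ l.tail, hits B M' u = hits B M u) →
      (IsAltChain B M' E av a₀ l ↔ IsAltChain B M E av a₀ l)
  | [], _ => Iff.rfl
  | _ :: l, h => by
    have h' : ∀ u ∈ l, hits B M' u = hits B M u := h
    simp only [IsAltChain, roots, hitsOf_congr h', blockedOf_congr h',
      isAltChain_congr fun u hu => h' u (List.mem_of_mem_tail hu)]

lemma length_le_card_hitsOf :
    ∀ {l : List (Finset V)}, IsAltChain B M E av a₀ l → (∀ t ∈ l, (hits B M t).Nonempty) →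
      l.length ≤ (hitsOf B M l).card
  | [], _, _ => by simp
  | s :: l, ⟨_, hdisj, _, hl⟩, hne => by
    have hs := card_pos.2 (hne s List.mem_cons_self)
    have := length_le_card_hitsOf hl fun t ht => hne t (List.mem_cons_of_mem s ht)
    rw [card_hitsOf_cons hdisj, List.length_cons]
    omega

lemma sizes_mem_setOf (hME : M ⊆ E) {l : List (Finset V)} (hl : IsAltChain B M E av a₀ l)
    (hne : ∀ t ∈ l.tail, (hits B M t).Nonempty) :
    sizes B M l ∈ {z : List ℕᵒᵈ | z.length ≤ E.card + 1 ∧ ∀ x ∈ z, ofDual x ≤ E.card + 1} := by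
  have hM := card_le_card hME
  refine ⟨?_, ?_⟩
  · have := length_le_card_hitsOf hl.tail hne
    have := card_le_card (hitsOf_subset (B := B) (M := M) l.tail)
    simp only [sizes, List.length_reverse, List.length_map]
    rw [List.length_tail] at *
    omega
  · simp only [sizes, List.mem_reverse, List.mem_map]
    rintro _ ⟨t, -, rfl⟩
    have := card_le_card (hits_subset (B := B) (M := M) t)
    simp only [ofDual_toDual]
    omega

end Chains

section Counting

variable {A B : Finset V} {E M : Finset (Finset V)} {av : Finset V → V} {a₀ : V} {m : ℕ}

lemma card_blocked_le (hEB : ∀ e ∈ E, (e ∩ B).card ≤ m + 1) (hME : M ⊆ E) {s : Finset V}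
    (hs : s ∈ E) : (blocked B M s).card ≤ m + 1 + m * (hits B M s).card := by
  have hsub : blocked B M s ⊆ s ∩ B ∪ (hits B M s).biUnion fun f => (f ∩ B) \ s := by
    intro v hv
    simp only [blocked, mem_union, mem_biUnion, mem_inter, mem_sdiff] at hv ⊢
    by_cases hvs : v ∈ s <;> aesop
  have hf : ∀ f ∈ hits B M s, ((f ∩ B) \ s).card ≤ m := by
    intro f hf
    obtain ⟨v, hvs, hvf⟩ := not_disjoint_iff.1 (mem_hits.1 hf).2
    have : (f ∩ B) \ s ⊂ f ∩ B := (ssubset_iff_of_subset sdiff_subset).2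
      ⟨v, mem_inter.2 ⟨hvf, (mem_inter.1 hvs).2⟩, fun h => (mem_sdiff.1 h).2 (mem_inter.1 hvs).1⟩
    have := card_lt_card this
    have := hEB f (hME (mem_hits.1 hf).1)
    omega
  calc (blocked B M s).card
      ≤ (s ∩ B).card + ∑ f ∈ hits B M s, ((f ∩ B) \ s).card :=
        (card_le_card hsub).trans ((card_union_le _ _).trans (by gcongr; exact card_biUnion_le))
    _ ≤ m + 1 + ∑ _f ∈ hits B M s, m := by
        gcongr with f hf'
        · exact hEB s hs
        · exact hf f hf'
    _ = m + 1 + m * (hits B M s).card := by simp [mul_comm]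

lemma card_blockedOf_le (hEB : ∀ e ∈ E, (e ∩ B).card ≤ m + 1) (hME : M ⊆ E) :
    ∀ {l : List (Finset V)}, IsAltChain B M E av a₀ l → (∀ t ∈ l, (hits B M t).Nonempty) →
      (blockedOf B M l).card ≤ (2 * m + 1) * (hitsOf B M l).card
  | [], _, _ => by simp [blockedOf]
  | s :: l, ⟨hs, hdisj, _, hl⟩, hne => by
    have h₁ := card_blocked_le hEB hME hs
    have h₂ := card_blockedOf_le hEB hME hl fun t ht => hne t (List.mem_cons_of_mem s ht)
    have h₃ := card_pos.2 (hne s List.mem_cons_self)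
    calc (blockedOf B M (s :: l)).card ≤ (blocked B M s).card + (blockedOf B M l).card := by
          rw [blockedOf_cons]
          exact card_union_le _ _
      _ ≤ (2 * m + 1) * ((hits B M s).card + (hitsOf B M l).card) := by nlinarith
      _ = (2 * m + 1) * (hitsOf B M (s :: l)).card := by rw [card_hitsOf_cons hdisj]

lemma roots_subset (hEA : ∀ e ∈ E, e ∩ A = {av e}) (hME : M ⊆ E) (ha₀ : a₀ ∈ A)
    (l : List (Finset V)) : roots B M av a₀ l ⊆ A :=
  insert_subset ha₀ <| image_subset_iff.2 fun _ hf =>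
    (mem_inter.1 (av_mem_inter hEA (hME (hitsOf_subset l hf)))).2

lemma card_roots (hEA : ∀ e ∈ E, e ∩ A = {av e}) (hM : IsMatching E M)
    (ha₀M : a₀ ∉ M.biUnion id) (l : List (Finset V)) :
    (roots B M av a₀ l).card = (hitsOf B M l).card + 1 := by
  have hsub := hitsOf_subset (B := B) (M := M) l
  have hav : ∀ f ∈ hitsOf B M l, av f ∈ f := fun f hf =>
    (mem_inter.1 (av_mem_inter hEA (hM.1 (hsub hf)))).1
  have hinj : Set.InjOn av (hitsOf B M l) := fun f hf g hg h =>
    hM.eq_of_av_mem hEA (hsub hf) (hsub hg) (h ▸ hav g hg)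
  have hnot : a₀ ∉ (hitsOf B M l).image av := by
    intro h
    obtain ⟨f, hf, rfl⟩ := mem_image.1 h
    exact ha₀M (mem_biUnion.2 ⟨f, hsub hf, hav f hf⟩)
  rw [roots, card_insert_of_notMem hnot, card_image_of_injOn hinj]

end Counting

/-- The hypothesis of the theorem for `ℓ = m + 2`, written with `|A'| = k + 1` to avoid truncated
subtraction. -/
def HaxellCondition (A B : Finset V) (E : Finset (Finset V)) (m : ℕ) : Prop :=
  ∀ A' ⊆ A, ∀ B' ⊆ B, ∀ k, A'.card = k + 1 → B'.card ≤ (2 * m + 1) * k →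
    ∃ e ∈ E, (e ∩ A').Nonempty ∧ Disjoint e B'

section Augmenting

variable {A B C : Finset V} {E M : Finset (Finset V)} {av : Finset V → V} {a₀ : V} {m : ℕ}

lemma IsMatching.insert_of_hits_eq_empty (hEA : ∀ e ∈ E, e ∩ A = {av e}) (hEAB : ∀ e ∈ E, e ⊆ A ∪ B)
    (hM : IsMatching E M) {x : Finset V} (hx : x ∈ E) (hav : av x ∉ M.biUnion id)
    (hxM : hits B M x = ∅) : IsMatching E (insert x M) := by
  refine ⟨insert_subset hx hM.1, ?_⟩
  rw [coe_insert]
  refine hM.2.insert fun f hf _ =>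
    disjoint_of_av_notMem hEA hEAB hx (fun h => hav (mem_biUnion.2 ⟨f, hf, h⟩)) ?_
  by_contra h
  exact notMem_empty f (hxM ▸ mem_hits.2 ⟨hf, h⟩)

lemma IsMatching.swap (hEA : ∀ e ∈ E, e ∩ A = {av e}) (hEAB : ∀ e ∈ E, e ⊆ A ∪ B)
    (hM : IsMatching E M) {f₀ x : Finset V} (hf₀ : f₀ ∈ M) (hx : x ∈ E) (hav : av x = av f₀)
    (hxM : hits B M x = ∅) : IsMatching E (insert x (M.erase f₀)) := by
  refine (hM.mono (erase_subset _ _)).insert_of_hits_eq_empty hEA hEAB hx ?_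
    (subset_empty.1 (hxM ▸ hits_mono (erase_subset _ _) x))
  rw [hav, mem_biUnion]
  rintro ⟨g, hg, hf₀g⟩
  exact ne_of_mem_erase hg (hM.eq_of_av_mem hEA hf₀ (mem_of_mem_erase hg) hf₀g).symm

lemma inter_biUnion_subset_swap (hEA : ∀ e ∈ E, e ∩ A = {av e}) (hME : M ⊆ E)
    {f₀ x : Finset V} (hf₀ : f₀ ∈ M) (hx : x ∈ E) (hav : av x = av f₀) :
    A ∩ M.biUnion id ⊆ (insert x (M.erase f₀)).biUnion id := by
  intro v hv
  obtain ⟨hvA, hvM⟩ := mem_inter.1 hv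
  obtain ⟨f, hf, hvf⟩ := mem_biUnion.1 hvM
  rw [mem_biUnion]
  by_cases hff₀ : f = f₀
  · subst hff₀
    refine ⟨x, mem_insert_self _ _, ?_⟩
    rw [eq_av_of_mem hEA (hME hf) hvf hvA, ← hav]
    exact (mem_inter.1 (av_mem_inter hEA hx)).1
  · exact ⟨f, mem_insert_of_mem (mem_erase.2 ⟨hff₀, hf⟩), hvf⟩

lemma hits_insert_erase {t x f₀ : Finset V} (h : Disjoint (t ∩ B) x) :
    hits B (insert x (M.erase f₀)) t = (hits B M t).erase f₀ := by
  ext f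
  simp only [mem_hits, mem_insert, mem_erase]
  constructor
  · rintro ⟨rfl | hf, hd⟩
    · exact absurd h hd
    · exact ⟨hf.1, hf.2, hd⟩
  · rintro ⟨hf₀, hf, hd⟩
    exact ⟨Or.inr ⟨hf₀, hf⟩, hd⟩

structure IsSearchState (B : Finset V) (E : Finset (Finset V)) (av : Finset V → V) (a₀ : V)
    (C : Finset V) (M : Finset (Finset V)) (l : List (Finset V)) : Prop where
  isMatching : IsMatching E M
  notMem : a₀ ∉ M.biUnion id
  subset : C ⊆ M.biUnion id
  isAltChain : IsAltChain B M E av a₀ l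
  nonempty : ∀ t ∈ l.tail, (hits B M t).Nonempty

lemma IsSearchState.exists_cons (hEA : ∀ e ∈ E, e ∩ A = {av e})
    (hEB : ∀ e ∈ E, (e ∩ B).card ≤ m + 1)
    (hcond : HaxellCondition A B E m)
    (ha₀ : a₀ ∈ A) {l : List (Finset V)} (hst : IsSearchState B E av a₀ C M l)
    (hne : ∀ t ∈ l, (hits B M t).Nonempty) : ∃ e, IsSearchState B E av a₀ C M (e :: l) := by
  obtain ⟨hM, ha₀M, hC, hl, -⟩ := hst
  obtain ⟨e, he, ⟨v, hv⟩, hdisj⟩ := hcond _ (roots_subset hEA hM.1 ha₀ l) _ (blockedOf_subset l) _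
    (card_roots hEA hM ha₀M l) (card_blockedOf_le hEB hM.1 hl hne)
  have hav : av e ∈ roots B M av a₀ l := by
    rw [← eq_av_of_mem hEA he (mem_inter.1 hv).1 (roots_subset hEA hM.1 ha₀ l (mem_inter.1 hv).2)]
    exact (mem_inter.1 hv).2
  exact ⟨e, hM, ha₀M, hC, ⟨he, hdisj, hav, hl⟩, hne⟩

lemma IsSearchState.exists_swap (hEA : ∀ e ∈ E, e ∩ A = {av e}) (hEAB : ∀ e ∈ E, e ⊆ A ∪ B)
    (ha₀ : a₀ ∈ A) (hCA : C ⊆ A) {s : Finset V} {l : List (Finset V)}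
    (hst : IsSearchState B E av a₀ C M (s :: l)) (hs : hits B M s = ∅) (has : av s ≠ a₀) :
    ∃ M₂ l₂, IsSearchState B E av a₀ C M₂ l₂ ∧ sizes B M (s :: l) < sizes B M₂ l₂ := by
  obtain ⟨hM, ha₀M, hC, ⟨hsE, hsdisj, hsroot, hl⟩, hne⟩ := hst
  obtain ⟨f₀, hf₀, hf₀s⟩ : ∃ f₀ ∈ hitsOf B M l, av f₀ = av s := by
    simpa [roots, has] using hsroot
  obtain ⟨t, ht, hf₀t⟩ : ∃ t ∈ l, f₀ ∈ hits B M t := by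
    simpa [hitsOf] using hf₀
  obtain ⟨l₂, l₁, rfl⟩ := List.append_of_mem ht
  have hf₀M := hits_subset t hf₀t
  obtain ⟨htE, htdisj, htroot, hl₁⟩ : IsAltChain B M E av a₀ (t :: l₁) := hl.of_append
  have hhits : ∀ u ∈ t :: l₁, hits B (insert s (M.erase f₀)) u = (hits B M u).erase f₀ :=
    fun u hu => hits_insert_erase
      (hsdisj.mono_right (inter_subset_blockedOf (List.mem_append_right l₂ hu))).symm
  have hkeep : ∀ u ∈ l₁, hits B (insert s (M.erase f₀)) u = hits B M u := fun u hu => by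
    rw [hhits u (List.mem_cons_of_mem t hu)]
    exact erase_eq_of_notMem fun h => disjoint_left.1 (disjoint_hits_hitsOf htdisj) hf₀t
      (mem_biUnion.2 ⟨u, List.mem_toFinset.2 hu, h⟩)
  refine ⟨insert s (M.erase f₀), t :: l₁,
    ⟨hM.swap hEA hEAB hf₀M hsE hf₀s.symm hs, ?_, ?_, ?_, ?_⟩, ?_⟩
  · rw [mem_biUnion]
    rintro ⟨g, hg, ha₀g⟩
    rcases mem_insert.1 hg with rfl | hg
    · exact has (eq_av_of_mem hEA hsE ha₀g ha₀).symm
    · exact ha₀M (mem_biUnion.2 ⟨g, mem_of_mem_erase hg, ha₀g⟩)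
  · exact (subset_inter hCA hC).trans (inter_biUnion_subset_swap hEA hM.1 hf₀M hsE hf₀s.symm)
  · exact (isAltChain_congr hkeep).2 ⟨htE, htdisj, htroot, hl₁⟩
  · intro u hu
    rw [hkeep u hu]
    exact hne u (List.mem_append_right _ (List.mem_cons_of_mem t hu))
  · refine sizes_append_cons_lt hkeep ?_ (s :: l₂)
    rw [hhits t List.mem_cons_self]
    exact card_erase_lt_of_mem hf₀t

lemma IsSearchState.exists_next (hEA : ∀ e ∈ E, e ∩ A = {av e}) (hEAB : ∀ e ∈ E, e ⊆ A ∪ B)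
    (hEB : ∀ e ∈ E, (e ∩ B).card ≤ m + 1)
    (hcond : HaxellCondition A B E m)
    (ha₀ : a₀ ∈ A) (hCA : C ⊆ A) {l : List (Finset V)} (hst : IsSearchState B E av a₀ C M l) :
    (∃ M', IsMatching E M' ∧ insert a₀ C ⊆ M'.biUnion id) ∨
      ∃ M₂ l₂, IsSearchState B E av a₀ C M₂ l₂ ∧ sizes B M l < sizes B M₂ l₂ := by
  by_cases hfull : ∀ t ∈ l, (hits B M t).Nonempty
  · obtain ⟨e, he⟩ := hst.exists_cons hEA hEB hcond ha₀ hfull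
    exact Or.inr ⟨M, e :: l, he, sizes_lt_sizes_cons e l⟩
  rcases l with _ | ⟨s, l⟩
  · exact absurd (fun t ht => by simp at ht) hfull
  have hs : hits B M s = ∅ := not_nonempty_iff_eq_empty.1 fun h =>
    hfull (List.forall_mem_cons.2 ⟨h, hst.nonempty⟩)
  by_cases has : av s = a₀
  · obtain ⟨hM, ha₀M, hC, ⟨hsE, -⟩, -⟩ := hst
    have hsa₀ : a₀ ∈ s := has ▸ (mem_inter.1 (av_mem_inter hEA hsE)).1
    refine Or.inl ⟨insert s M, hM.insert_of_hits_eq_empty hEA hEAB hsE (by rwa [has]) hs,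
      insert_subset ?_ ?_⟩
    · exact mem_biUnion.2 ⟨s, mem_insert_self _ _, hsa₀⟩
    · exact hC.trans (biUnion_subset_biUnion_of_subset_left _ (subset_insert _ _))
  · exact Or.inr (hst.exists_swap hEA hEAB ha₀ hCA hs has)

theorem IsSearchState.exists_isMatching (hEA : ∀ e ∈ E, e ∩ A = {av e})
    (hEAB : ∀ e ∈ E, e ⊆ A ∪ B) (hEB : ∀ e ∈ E, (e ∩ B).card ≤ m + 1)
    (hcond : HaxellCondition A B E m)
    (ha₀ : a₀ ∈ A) (hCA : C ⊆ A) {l : List (Finset V)} (hst : IsSearchState B E av a₀ C M l) :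
    ∃ M', IsMatching E M' ∧ insert a₀ C ⊆ M'.biUnion id := by
  refine of_forall_or_exists_lt (finite_setOf_length_le_forall_le (E.card + 1))
    (fun x : Finset (Finset V) × List (Finset V) => sizes B x.1 x.2)
    (p := fun x => IsSearchState B E av a₀ C x.1 x.2)
    (fun x hx => sizes_mem_setOf hx.isMatching.1 hx.isAltChain hx.nonempty) (fun x hx => ?_)
    (x := (M, l)) hst
  exact (hx.exists_next hEA hEAB hEB hcond ha₀ hCA).imp_right
    fun ⟨M₂, l₂, hst₂, hlt⟩ => ⟨(M₂, l₂), hst₂, hlt⟩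

theorem exists_isMatching_subset_biUnion (hEA : ∀ e ∈ E, e ∩ A = {av e})
    (hEAB : ∀ e ∈ E, e ⊆ A ∪ B) (hEB : ∀ e ∈ E, (e ∩ B).card ≤ m + 1)
    (hcond : HaxellCondition A B E m) :
    ∃ M, IsMatching E M ∧ A ⊆ M.biUnion id := by
  classical
  obtain ⟨M, hM, hmax⟩ := (E.powerset.filter (IsMatching E)).exists_max_image
    (fun M => (A ∩ M.biUnion id).card)
    ⟨∅, mem_filter.2 ⟨empty_mem_powerset E, empty_subset E, by simp⟩⟩
  rw [mem_filter] at hM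
  refine ⟨M, hM.2, fun a₀ ha₀ => by_contra fun ha₀M => ?_⟩
  obtain ⟨M', hM', hsub⟩ := IsSearchState.exists_isMatching hEA hEAB hEB hcond ha₀
    inter_subset_left (l := []) ⟨hM.2, ha₀M, inter_subset_right, trivial, by simp⟩
  have h₁ := hmax M' (mem_filter.2 ⟨mem_powerset.2 hM'.1, hM'⟩)
  have h₂ := card_le_card (subset_inter (insert_subset ha₀ inter_subset_left) hsub)
  rw [card_insert_of_notMem fun h => ha₀M (mem_inter.1 h).2] at h₂
  omega

end Augmenting

end Haxell

theorem haxell_matching_general {V : Type*} [DecidableEq V] (ℓ : ℕ) (hℓ : 2 ≤ ℓ)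
    (A B : Finset V)
    (E : Finset (Finset V))
    (hedge : ∀ e ∈ E, e ⊆ A ∪ B ∧ e.card = ℓ ∧ (e ∩ A).card = 1 ∧ (e ∩ B).card = ℓ - 1)
    (hcond : ∀ A' ⊆ A, ∀ B' ⊆ B,
      ((B'.card : ℤ) ≤ (2 * (ℓ : ℤ) - 3) * ((A'.card : ℤ) - 1)) →
      ∃ e ∈ E, (e ∩ A').Nonempty ∧ Disjoint (e : Finset V) B') :
    ∃ M ⊆ E, (∀ e ∈ M, ∀ f ∈ M, e ≠ f → Disjoint e f) ∧
      ∀ a ∈ A, ∃ e ∈ M, a ∈ e := by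
  obtain ⟨m, rfl⟩ : ∃ m, ℓ = m + 2 := ⟨ℓ - 2, by omega⟩
  rcases isEmpty_or_nonempty V with hV | hV
  · exact ⟨∅, empty_subset E, by simp, fun a => isEmptyElim a⟩
  choose! av hav using fun e he => card_eq_one.1 (hedge e he).2.2.1
  obtain ⟨M, hM, hA⟩ := Haxell.exists_isMatching_subset_biUnion (m := m) hav
    (fun e he => (hedge e he).1)
    (fun e he => by have := (hedge e he).2.2.2; omega)
    fun A' hA' B' hB' k hk hB => hcond A' hA' B' hB' <| by
      calc (B'.card : ℤ) ≤ ((2 * m + 1) * k : ℕ) := by exact_mod_cast hB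
        _ = (2 * ((m + 2 : ℕ) : ℤ) - 3) * ((A'.card : ℤ) - 1) := by rw [hk]; push_cast; ring
  exact ⟨M, hM.1, fun e he f hf hef => hM.2 he hf hef, fun a ha => by simpa using hA ha⟩

/-- Haxell's hypergraph matching condition: let `𝓗` be an `ℓ`-uniform hypergraph on
`A ∪ B` in which every edge meets `A` in one vertex and `B` in `ℓ-1` vertices. If for
all `A' ⊆ A`, `B' ⊆ B` with `|B'| ≤ (2ℓ-3)(|A'|-1)` there is an edge intersecting `A'`
and disjoint from `B'`, then there is a matching saturating `A`. -/
theorem haxell_matching {V : Type*} [DecidableEq V] (ℓ : ℕ) (hℓ : 2 ≤ ℓ)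
    (A B : Finset V) (hAB : Disjoint A B)
    (E : Finset (Finset V))
    (hedge : ∀ e ∈ E, e ⊆ A ∪ B ∧ e.card = ℓ ∧ (e ∩ A).card = 1 ∧ (e ∩ B).card = ℓ - 1)
    (hcond : ∀ A' ⊆ A, ∀ B' ⊆ B,
      ((B'.card : ℤ) ≤ (2 * (ℓ : ℤ) - 3) * ((A'.card : ℤ) - 1)) →
      ∃ e ∈ E, (e ∩ A').Nonempty ∧ Disjoint (e : Finset V) B') :
    ∃ M ⊆ E, (∀ e ∈ M, ∀ f ∈ M, e ≠ f → Disjoint e f) ∧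
      ∀ a ∈ A, ∃ e ∈ M, a ∈ e :=
  haxell_matching_general ℓ hℓ A B E hedge hcond
end

section
/- Let k ≥ 2, t ∈ {2k-1, 2k}, and let F_abs be the R-absorber for a set R = {r₁, ..., r_t}. Then both F_abs and F_abs − R have a C_t-factor. -/
/-- `G` has a `C_t`-factor on the vertex set `A`: a permutation fixing everything
outside `A`, moving each vertex of `A` along an edge of `G`, all of whose orbits on `A`
have size exactly `t`. The orbits are then vertex-disjoint `t`-cycles covering `A`. -/
def HasCycleFactorOn {V : Type*} (G : SimpleGraph V) (A : Set V) (t : ℕ) : Prop :=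
  ∃ σ : Equiv.Perm V,
    (∀ a ∈ A, σ a ∈ A ∧ G.Adj a (σ a) ∧ (σ ^ t) a = a ∧
      ∀ i : ℕ, 0 < i → i < t → (σ ^ i) a ≠ a) ∧
    (∀ a, a ∉ A → σ a = a)

/-- `H` is a `(u, w)`-switcher (with respect to `C_t`-factors): `u, w ∈ H` and both
`H - u` and `H - w` have a `C_t`-factor. -/
def IsSwitcher {V : Type*} (G : SimpleGraph V) (t : ℕ) (H : Set V) (u w : V) : Prop :=
  u ∈ H ∧ w ∈ H ∧ u ≠ w ∧
    HasCycleFactorOn G (H \ {u}) t ∧ HasCycleFactorOn G (H \ {w}) t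

/-
The `t`-cycle `s 0, …, s (t-1)` is itself one copy of `C_t`. Removing it leaves the
disjoint sets `S i - s i`, and removing `R` instead leaves the disjoint sets `S i - r i`; each of
these has a `C_t`-factor by the switcher property, and `C_t`-factors of disjoint sets combine.
-/

open Set

section

variable {V : Type*} {G : SimpleGraph V} {t : ℕ}

lemma hasCycleFactorOn_empty : HasCycleFactorOn G ∅ t :=
  ⟨1, fun _ h => h.elim, fun _ _ => rfl⟩

lemma Equiv.Perm.Disjoint.mul_pow_apply_of_apply_eq_self {σ τ : Equiv.Perm V}
    (h : σ.Disjoint τ) {a : V} (ha : τ a = a) (n : ℕ) : ((σ * τ) ^ n) a = (σ ^ n) a := by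
  rw [h.commute.mul_pow, Equiv.Perm.mul_apply, Equiv.Perm.pow_apply_eq_self_of_apply_eq_self ha]

lemma HasCycleFactorOn.union {A B : Set V} (hA : HasCycleFactorOn G A t)
    (hd : Disjoint A B) (hB : HasCycleFactorOn G B t) : HasCycleFactorOn G (A ∪ B) t := by
  obtain ⟨σ, hσ, hσ_fix⟩ := hA
  obtain ⟨τ, hτ, hτ_fix⟩ := hB
  have hστ : σ.Disjoint τ := fun x => (em (x ∈ A)).imp
    (fun hx => hτ_fix x (hd.notMem_of_mem_left hx)) (hσ_fix x) |>.symm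
  refine ⟨σ * τ, ?_, fun a ha => ?_⟩
  · rintro a (ha | ha)
    · have h := hστ.mul_pow_apply_of_apply_eq_self (hτ_fix a (hd.notMem_of_mem_left ha))
      have h1 : (σ * τ) a = σ a := by simpa using h 1
      obtain ⟨hmem, hadj, hper, hmin⟩ := hσ a ha
      exact ⟨h1 ▸ Or.inl hmem, h1 ▸ hadj, (h t).trans hper,
        fun i hi hit => h i ▸ hmin i hi hit⟩
    · rw [hστ.commute.eq]
      have h := hστ.symm.mul_pow_apply_of_apply_eq_self (hσ_fix a (hd.notMem_of_mem_right ha))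
      have h1 : (τ * σ) a = τ a := by simpa using h 1
      obtain ⟨hmem, hadj, hper, hmin⟩ := hτ a ha
      exact ⟨h1 ▸ Or.inr hmem, h1 ▸ hadj, (h t).trans hper,
        fun i hi hit => h i ▸ hmin i hi hit⟩
  · rw [Equiv.Perm.mul_apply, hτ_fix a fun h => ha (Or.inr h), hσ_fix a fun h => ha (Or.inl h)]

lemma HasCycleFactorOn.biUnion {ι : Type*} {I : Set ι} (hI : I.Finite) {A : ι → Set V}
    (hd : I.PairwiseDisjoint A) (h : ∀ i ∈ I, HasCycleFactorOn G (A i) t) :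
    HasCycleFactorOn G (⋃ i ∈ I, A i) t := by
  induction I, hI using Set.Finite.induction_on with
  | empty => simpa using hasCycleFactorOn_empty
  | @insert j I hj _ ih =>
    rw [biUnion_insert]
    refine (h j (mem_insert j I)).union ?_
      (ih (hd.subset (subset_insert j I)) fun i hi => h i (mem_insert_of_mem j hi))
    exact disjoint_iUnion₂_right.mpr fun i hi =>
      hd (mem_insert j I) (mem_insert_of_mem j hi) (ne_of_mem_of_not_mem hi hj).symm

lemma hasCycleFactorOn_range {α : Type*} (e : Equiv.Perm α) (f : α ↪ V)
    (hadj : ∀ a, G.Adj (f a) (f (e a))) (hper : ∀ a, (e ^ t) a = a)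
    (hmin : ∀ a, ∀ i : ℕ, 0 < i → i < t → (e ^ i) a ≠ a) :
    HasCycleFactorOn G (range f) t := by
  classical
  set σ := e.extendDomain (Equiv.ofInjective f f.injective)
  have hpow (n : ℕ) (a : α) : (σ ^ n) (f a) = f ((e ^ n) a) := by
    simpa [σ] using (e ^ n).extendDomain_apply_image (Equiv.ofInjective f f.injective) a
  have h1 (a : α) : σ (f a) = f (e a) := by simpa using hpow 1 a
  refine ⟨σ, ?_, fun b hb => Equiv.Perm.extendDomain_apply_not_subtype _ _ hb⟩
  rintro _ ⟨a, rfl⟩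
  exact ⟨h1 a ▸ mem_range_self _, h1 a ▸ hadj a, by rw [hpow, hper],
    fun i hi hit => by rw [hpow, f.injective.ne_iff]; exact hmin a i hi hit⟩

open Fin.NatCast in
lemma Fin.addRight_one_pow_apply [NeZero t] (a : Fin t) (n : ℕ) :
    (Equiv.addRight (1 : Fin t) ^ n) a = a + (n : Fin t) := by
  induction n with
  | zero => simp
  | succ n ih =>
    rw [pow_succ', Equiv.Perm.mul_apply, ih, Equiv.coe_addRight, Nat.cast_succ, ← add_assoc]

open Fin.NatCast in
lemma hasCycleFactorOn_image_of_cycle (s : ℕ → V) (hinj : InjOn s (Iio t))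
    (hadj : ∀ i < t, G.Adj (s i) (s ((i + 1) % t))) : HasCycleFactorOn G (s '' Iio t) t := by
  rcases Nat.eq_zero_or_pos t with rfl | ht
  · simpa using hasCycleFactorOn_empty
  have : NeZero t := ⟨ht.ne'⟩
  let f : Fin t ↪ V := ⟨fun i => s i, fun i j h => Fin.ext (hinj i.isLt j.isLt h)⟩
  have hf (i : Fin t) : f i = s i := rfl
  have hrange : range f = s '' Iio t := by
    ext x
    simp [hf, Fin.exists_iff]
  rw [← hrange]
  refine hasCycleFactorOn_range (Equiv.addRight 1) f (fun a => ?_) (fun a => ?_)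
    fun a i hi hit => ?_
  · simpa [hf, Fin.val_add, Nat.add_mod_mod] using hadj a a.isLt
  · rw [Fin.addRight_one_pow_apply, Fin.natCast_self, add_zero]
  · rw [Fin.addRight_one_pow_apply, ne_eq, add_eq_left, Fin.natCast_eq_zero]
    exact Nat.not_dvd_of_pos_of_lt hi hit

lemma biUnion_diff_singleton_eq_diff_image {ι : Type*} {I : Set ι} {S : ι → Set V}
    (hd : I.PairwiseDisjoint S) {r : ι → V} (hr : ∀ i ∈ I, r i ∈ S i) :
    ⋃ i ∈ I, (S i \ {r i}) = (⋃ i ∈ I, S i) \ r '' I := by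
  ext x
  simp only [mem_iUnion, mem_sdiff, mem_singleton_iff, mem_image, exists_prop, not_exists,
    not_and]
  constructor
  · rintro ⟨i, hi, hx, hne⟩
    refine ⟨⟨i, hi, hx⟩, fun j hj hjx => hne ?_⟩
    subst hjx
    rw [hd.elim_set hi hj (r j) hx (hr j hj)]
  · rintro ⟨⟨i, hi, hx⟩, hnot⟩
    exact ⟨i, hi, hx, fun h => hnot i hi h.symm⟩

end

theorem absorber_two_factors_general {V : Type*} (G : SimpleGraph V) (t : ℕ)
    (s r : ℕ → V) (S : ℕ → Set V)
    (hcycle : ∀ i < t, G.Adj (s i) (s ((i + 1) % t)))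
    (hs : ∀ i < t, s i ∈ S i)
    (hdisj : ∀ i < t, ∀ j < t, i ≠ j → Disjoint (S i) (S j))
    (hcover : (Set.univ : Set V) = ⋃ i ∈ Finset.range t, S i)
    (hsw : ∀ i < t, IsSwitcher G t (S i) (s i) (r i)) :
    HasCycleFactorOn G Set.univ t ∧
      HasCycleFactorOn G (Set.univ \ {x | ∃ i < t, x = r i}) t := by
  have hS : (Iio t).PairwiseDisjoint S := fun i hi j hj hij => hdisj i hi j hj hij
  have hS_univ : ⋃ i ∈ Iio t, S i = univ := by simpa using hcover.symm
  have hs_inj : InjOn s (Iio t) := fun i hi j hj hij =>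
    hS.elim_set hi hj (s i) (hs i hi) (hij ▸ hs j hj)
  have factor_off (u : ℕ → V) (hu : ∀ i < t, u i ∈ S i)
      (hfac : ∀ i < t, HasCycleFactorOn G (S i \ {u i}) t) :
      HasCycleFactorOn G (univ \ u '' Iio t) t := by
    rw [← hS_univ, ← biUnion_diff_singleton_eq_diff_image hS hu]
    exact .biUnion (finite_Iio t) (hS.mono fun i => sdiff_subset) hfac
  constructor
  · rw [← sdiff_union_of_subset (subset_univ (s '' Iio t))]
    exact (factor_off s hs fun i hi => (hsw i hi).2.2.2.1).union disjoint_sdiff_left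
      (hasCycleFactorOn_image_of_cycle s hs_inj hcycle)
  · have hR : {x | ∃ i < t, x = r i} = r '' Iio t := by
      ext
      simp [eq_comm]
    rw [hR]
    exact factor_off r (fun i hi => (hsw i hi).2.1) fun i hi => (hsw i hi).2.2.2.2

/-- Proposition 2.4(a): let `k ≥ 2`, `t ∈ {2k-1, 2k}` and let the `R`-absorber
`F_abs` (the whole graph `G`) consist of a `t`-cycle `s 0, ..., s (t-1)` together with
pairwise disjoint `(s i, r i)`-switchers covering all vertices. Then both `F_abs` and
`F_abs − R` have a `C_t`-factor, where `R = {r 0, ..., r (t-1)}`. -/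
theorem absorber_two_factors {V : Type*} [Fintype V] (G : SimpleGraph V)
    (k t : ℕ) (hk : 2 ≤ k) (ht : t = 2 * k - 1 ∨ t = 2 * k)
    (s r : ℕ → V) (S : ℕ → Set V)
    (hcycle : ∀ i < t, G.Adj (s i) (s ((i + 1) % t)))
    (hs : ∀ i < t, s i ∈ S i)
    (hdisj : ∀ i < t, ∀ j < t, i ≠ j → Disjoint (S i) (S j))
    (hcover : (Set.univ : Set V) = ⋃ i ∈ Finset.range t, S i)
    (hsw : ∀ i < t, IsSwitcher G t (S i) (s i) (r i))
    (hedges : ∀ a b : V, G.Adj a b →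
      (∃ i < t, a ∈ S i ∧ b ∈ S i) ∨
      (∃ i < t, (a = s i ∧ b = s ((i + 1) % t)) ∨ (b = s i ∧ a = s ((i + 1) % t)))) :
    HasCycleFactorOn G Set.univ t ∧
      HasCycleFactorOn G (Set.univ \ {x | ∃ i < t, x = r i}) t :=
  absorber_two_factors_general G t s r S hcycle hs hdisj hcover hsw
end

section
/- Let a, b, c be natural numbers with b ≥ 1, c ≥ 1 and n ≥ 1. Then binom(n, b) · binom(a·b, c) ≤ e^{c+b} · binom(n·a, c), provided c ≥ b. -/
/-! Bound both binomials on the left by `x ^ k / k !`, trade the factorials for `e ^ b` and `e ^ c`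
via `k ^ k ≤ e ^ k k !`, absorb `b ^ (c - b) ≤ n ^ (c - b)`, and finish with the lower bound
`(m / c) ^ c ≤ binom(m, c)`. When `b > n` or `c > a b` the left side vanishes. -/

open Nat

namespace Nat

theorem pow_mul_factorial_le_descFactorial_mul_pow {m c : ℕ} (h : c ≤ m) :
    m ^ c * c ! ≤ m.descFactorial c * c ^ c := by
  have hl : m ^ c * c ! = ∏ i ∈ Finset.range c, m * (c - i) := by
    rw [Finset.prod_mul_distrib, Finset.prod_const, ← descFactorial_self,
      descFactorial_eq_prod_range, Finset.card_range]
  have hr : m.descFactorial c * c ^ c = ∏ i ∈ Finset.range c, (m - i) * c := by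
    rw [Finset.prod_mul_distrib, Finset.prod_const, descFactorial_eq_prod_range, Finset.card_range]
  rw [hl, hr]
  -- factorwise, `m (c - i) ≤ (m - i) c` because `i c ≤ i m`
  refine Finset.prod_le_prod' fun i _ => ?_
  rw [Nat.mul_sub, Nat.sub_mul, mul_comm i c]
  exact Nat.sub_le_sub_left (Nat.mul_le_mul_right i h) _

theorem pow_le_choose_mul_pow {m c : ℕ} (h : c ≤ m) : m ^ c ≤ m.choose c * c ^ c := by
  have := pow_mul_factorial_le_descFactorial_mul_pow h
  rw [descFactorial_eq_factorial_mul_choose, mul_assoc, mul_comm] at this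
  exact Nat.le_of_mul_le_mul_left this (factorial_pos c)

theorem pow_div_pow_le_choose {m c : ℕ} (h : c ≤ m) : (m : ℝ) ^ c / (c : ℝ) ^ c ≤ m.choose c := by
  rw [div_le_iff₀ (by exact_mod_cast pow_self_pos)]
  exact_mod_cast pow_le_choose_mul_pow h

theorem pow_mul_pow_le_pow_mul_pow {n b c : ℕ} (hbn : b ≤ n) (hbc : b ≤ c) :
    n ^ b * b ^ c ≤ n ^ c * b ^ b := by
  obtain ⟨d, rfl⟩ := Nat.exists_eq_add_of_le hbc
  calc n ^ b * b ^ (b + d) = n ^ b * b ^ b * b ^ d := by ring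
    _ ≤ n ^ b * b ^ b * n ^ d := Nat.mul_le_mul_left _ (Nat.pow_le_pow_left hbn d)
    _ = n ^ (b + d) * b ^ b := by ring

end Nat

theorem choose_mul_choose_le_general (a b c n : ℕ) (hcb : b ≤ c) :
    (n.choose b : ℝ) * ((a * b).choose c : ℝ) ≤
      Real.exp ((c : ℝ) + (b : ℝ)) * ((n * a).choose c : ℝ) := by
  by_cases hnon : b ≤ n ∧ c ≤ a * b
  swap
  · have : n.choose b * (a * b).choose c = 0 := by
      rcases not_and_or.mp hnon with h | h <;> simp [choose_eq_zero_of_lt (not_le.mp h)]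
    rw [← Nat.cast_mul, this, Nat.cast_zero]
    positivity
  obtain ⟨hbn, hcab⟩ := hnon
  have hcna : c ≤ n * a := hcab.trans (by rw [mul_comm n]; exact Nat.mul_le_mul_left a hbn)
  have hpow : (n : ℝ) ^ b * (b : ℝ) ^ c ≤ (n : ℝ) ^ c * (b : ℝ) ^ b :=
    mod_cast pow_mul_pow_le_pow_mul_pow hbn hcb
  have hcc : (c : ℝ) ^ c ≠ 0 := by exact_mod_cast pow_self_pos.ne'
  calc (n.choose b : ℝ) * ((a * b).choose c : ℝ)
      ≤ ((n : ℝ) ^ b / b !) * (((a * b : ℕ) : ℝ) ^ c / c !) :=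
        mul_le_mul (choose_le_pow_div b n) (choose_le_pow_div c (a * b)) (by positivity)
          (by positivity)
    _ = (a : ℝ) ^ c * ((n : ℝ) ^ b * (b : ℝ) ^ c) / (b ! * c !) := by push_cast; ring
    _ ≤ (a : ℝ) ^ c * ((n : ℝ) ^ c * (b : ℝ) ^ b) / (b ! * c !) := by gcongr
    _ = ((n * a : ℕ) : ℝ) ^ c * ((b : ℝ) ^ b / b !) / c ! := by push_cast; ring
    _ ≤ ((n * a : ℕ) : ℝ) ^ c * Real.exp b / c ! := by
        gcongr; exact Real.pow_div_factorial_le_exp _ (Nat.cast_nonneg b) b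
    _ = Real.exp b * (((n * a : ℕ) : ℝ) ^ c / (c : ℝ) ^ c) * ((c : ℝ) ^ c / c !) := by
        field_simp
    _ ≤ Real.exp b * ((n * a).choose c : ℝ) * Real.exp c := by
        gcongr
        · exact pow_div_pow_le_choose hcna
        · exact Real.pow_div_factorial_le_exp _ (Nat.cast_nonneg c) c
    _ = Real.exp ((c : ℝ) + (b : ℝ)) * ((n * a).choose c : ℝ) := by rw [Real.exp_add]; ring

/-- Binomial estimate: for natural numbers `a, b, c, n` with `b, c, n ≥ 1` and `c ≥ b`,
`binom(n, b) · binom(a·b, c) ≤ e^{c+b} · binom(n·a, c)`. -/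
theorem choose_mul_choose_le (a b c n : ℕ) (hb : 1 ≤ b) (hc : 1 ≤ c) (hn : 1 ≤ n)
    (hcb : b ≤ c) :
    (n.choose b : ℝ) * ((a * b).choose c : ℝ) ≤
      Real.exp ((c : ℝ) + (b : ℝ)) * ((n * a).choose c : ℝ) :=
  choose_mul_choose_le_general a b c n hcb
end
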